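/- arXiv:1910.04900 — 2 statements merged into one kernel-verified Lean document; each statement's English description precedes it below -/
import Mathlib

section
/- Let (P_i)_{i≥1} be [0,1]-valued p-values on a probability space, H0 ⊆ ℕ the index set of true nulls, and (L_i)_{i≥1} a fixed sequence of natural-number lags satisfying L_{i+1} ≤ L_i + 1. Assume each null p-value P_i (i ∈ H0) is uniformly conservative and is independent of the σ-algebra G_{i−L_i−1} = σ(P_1,…,P_{i−L_i−1}). Fix α ∈ (0,1) and for each i let α_i, λ_i, τ_i : Ω → (0,1) be G_{i−L_i−1}-measurable with λ_i < τ_i and α_i < τ_i almost surely, and assume that almost surely Σ_{i : λ_i < P_i ≤ τ_i} α_i/(τ_i−λ_i) ≤ α. Then E[ #{ i ∈ H0 : P_i ≤ α_i } ] ≤ α; in particular ℙ(∃ i ∈ H0 with P_i ≤ α_i) ≤ α. -/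
/-!
Independence of a null p-value `P_i` from the lagged past lets one freeze the levels
`α_i, λ_i, τ_i`. For fixed levels, uniform conservativity at `τ_i` gives
`ℙ(P_i ≤ α_i) ≤ (α_i/τ_i) ℙ(P_i ≤ τ_i)` and `ℙ(P_i ≤ λ_i) ≤ (λ_i/τ_i) ℙ(P_i ≤ τ_i)`, hence
`ℙ(P_i ≤ α_i) ≤ α_i/(τ_i - λ_i) · ℙ(λ_i < P_i ≤ τ_i)`, which is the expected wealth spent on
test `i`. Summing over the nulls and using the almost sure budget bounds the PFER by `α`; the
union bound then bounds the FWER.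
-/

open MeasureTheory ProbabilityTheory
open scoped ENNReal

/-- The σ-algebra generated by the first `i` p-values `P 0, …, P (i-1)`. -/
def pastFiltration {Ω : Type*} [MeasurableSpace Ω] (P : ℕ → Ω → ℝ) (i : ℕ) :
    MeasurableSpace Ω :=
  ⨆ j ∈ Finset.range i, MeasurableSpace.comap (P j) inferInstance

open Set

section

variable {Ω : Type*} {mΩ : MeasurableSpace Ω} {μ : Measure Ω}

def UniformlyConservative (μ : Measure Ω) (Q : Ω → ℝ) : Prop :=
  ∀ x ∈ Icc (0 : ℝ) 1, ∀ τ ∈ Icc (0 : ℝ) 1,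
    μ {ω | Q ω ≤ x * τ} ≤ ENNReal.ofReal x * μ {ω | Q ω ≤ τ}

/-- The summand `α_i / (τ_i - λ_i) · 1{λ_i < P_i ≤ τ_i}` of the ADDIS-Spending budget. -/
noncomputable def spendingCost (a l t p : ℝ) : ℝ≥0∞ :=
  ENNReal.ofReal (if l < p ∧ p ≤ t then a / (t - l) else 0)

lemma spendingCost_eq_indicator (a l t p : ℝ) :
    spendingCost a l t p = (Ioc l t).indicator (fun _ => ENNReal.ofReal (a / (t - l))) p := by
  by_cases h : l < p ∧ p ≤ t <;> simp [spendingCost, indicator, h]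

lemma Measurable.spendingCost {β : Type*} [MeasurableSpace β] {a l t p : β → ℝ}
    (ha : Measurable a) (hl : Measurable l) (ht : Measurable t) (hp : Measurable p) :
    Measurable fun x => _root_.spendingCost (a x) (l x) (t x) (p x) :=
  ENNReal.measurable_ofReal.comp <| Measurable.ite
    ((measurableSet_lt hl hp).inter (measurableSet_le hp ht)) (ha.div (ht.sub hl)) measurable_const

lemma lintegral_spendingCost {Q : Ω → ℝ} (hQ : Measurable Q) (a l t : ℝ) :
    ∫⁻ ω, spendingCost a l t (Q ω) ∂μ = ENNReal.ofReal (a / (t - l)) * μ (Q ⁻¹' Ioc l t) := by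
  simp_rw [spendingCost_eq_indicator]
  exact lintegral_indicator_const_comp hQ measurableSet_Ioc _

lemma ProbabilityTheory.IndepFun.lintegral_comp_eq_lintegral_lintegral [IsFiniteMeasure μ]
    {α β : Type*} [MeasurableSpace α] [MeasurableSpace β] {X : Ω → α} {Y : Ω → β}
    (hX : Measurable X) (hY : Measurable Y) (hXY : IndepFun X Y μ) {g : α × β → ℝ≥0∞}
    (hg : Measurable g) :
    ∫⁻ ω, g (X ω, Y ω) ∂μ = ∫⁻ ω', ∫⁻ ω, g (X ω, Y ω') ∂μ ∂μ := by
  calc ∫⁻ ω, g (X ω, Y ω) ∂μ = ∫⁻ p, g p ∂(μ.map X).prod (μ.map Y) := by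
        rw [← (indepFun_iff_map_prod_eq_prod_map_map hX.aemeasurable hY.aemeasurable).1 hXY,
          lintegral_map hg (hX.prodMk hY)]
    _ = ∫⁻ y, ∫⁻ x, g (x, y) ∂μ.map X ∂μ.map Y := lintegral_prod_symm' g hg
    _ = ∫⁻ ω', ∫⁻ ω, g (X ω, Y ω') ∂μ ∂μ := by
        rw [lintegral_map hg.lintegral_prod_left' hY]
        exact lintegral_congr fun ω' => lintegral_map (hg.comp measurable_prodMk_right) hX

namespace UniformlyConservative

variable [IsFiniteMeasure μ] {Q : Ω → ℝ}

lemma measureReal_le (hQ : UniformlyConservative μ Q) {x τ : ℝ} (hx : x ∈ Icc 0 1)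
    (hτ : τ ∈ Icc 0 1) : μ.real (Q ⁻¹' Iic (x * τ)) ≤ x * μ.real (Q ⁻¹' Iic τ) := by
  have h := ENNReal.toReal_mono (by finiteness) (hQ x hx τ hτ)
  rwa [ENNReal.toReal_mul, ENNReal.toReal_ofReal hx.1] at h

lemma measure_Iic_le_mul_measure_Ioc (hQ : UniformlyConservative μ Q) {a l t : ℝ}
    (ha : 0 ≤ a) (hat : a ≤ t) (hl : 0 ≤ l) (hlt : l < t) (ht : t ≤ 1) :
    μ (Q ⁻¹' Iic a) ≤ ENNReal.ofReal (a / (t - l)) * μ (Q ⁻¹' Ioc l t) := by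
  have ht0 : 0 < t := hl.trans_lt hlt
  have hscaled : ∀ b, 0 ≤ b → b ≤ t → μ.real (Q ⁻¹' Iic b) ≤ b / t * μ.real (Q ⁻¹' Iic t) := by
    intro b hb0 hbt
    have h := hQ.measureReal_le ⟨div_nonneg hb0 ht0.le, (div_le_one ht0).2 hbt⟩ ⟨ht0.le, ht⟩
    rwa [div_mul_cancel₀ b ht0.ne'] at h
  have hsplit : μ.real (Q ⁻¹' Iic t) ≤ μ.real (Q ⁻¹' Iic l) + μ.real (Q ⁻¹' Ioc l t) := by
    rw [← Iic_union_Ioc_eq_Iic hlt.le, preimage_union]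
    exact measureReal_union_le _ _
  have hcandidate : (t - l) / t * μ.real (Q ⁻¹' Iic t) ≤ μ.real (Q ⁻¹' Ioc l t) := by
    have := hscaled l hl hlt.le
    rw [sub_div, div_self ht0.ne']
    linarith
  have hreal : μ.real (Q ⁻¹' Iic a) ≤ a / (t - l) * μ.real (Q ⁻¹' Ioc l t) :=
    calc μ.real (Q ⁻¹' Iic a) ≤ a / t * μ.real (Q ⁻¹' Iic t) := hscaled a ha hat
      _ = a / (t - l) * ((t - l) / t * μ.real (Q ⁻¹' Iic t)) := by
          field_simp [(sub_pos.2 hlt).ne']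
      _ ≤ a / (t - l) * μ.real (Q ⁻¹' Ioc l t) :=
          mul_le_mul_of_nonneg_left hcandidate (div_nonneg ha (sub_pos.2 hlt).le)
  rw [← ofReal_measureReal, ← ofReal_measureReal,
    ← ENNReal.ofReal_mul (div_nonneg ha (sub_pos.2 hlt).le)]
  exact ENNReal.ofReal_le_ofReal hreal

lemma measure_le_lintegral_spendingCost (hQ : UniformlyConservative μ Q) (hQm : Measurable Q)
    {a l t : Ω → ℝ} (ha : Measurable a) (hl : Measurable l) (ht : Measurable t)
    (hind : IndepFun Q (fun ω => (a ω, l ω, t ω)) μ)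
    (hlevels : ∀ᵐ ω ∂μ, 0 ≤ a ω ∧ a ω ≤ t ω ∧ 0 ≤ l ω ∧ l ω < t ω ∧ t ω ≤ 1) :
    μ {ω | Q ω ≤ a ω} ≤ ∫⁻ ω, spendingCost (a ω) (l ω) (t ω) (Q ω) ∂μ := by
  have hV : Measurable fun ω => (a ω, l ω, t ω) := ha.prodMk (hl.prodMk ht)
  set reject : ℝ × ℝ × ℝ × ℝ → ℝ≥0∞ := {p | p.1 ≤ p.2.1}.indicator 1
  set cost : ℝ × ℝ × ℝ × ℝ → ℝ≥0∞ := fun p => spendingCost p.2.1 p.2.2.1 p.2.2.2 p.1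
  have hreject : Measurable reject :=
    measurable_one.indicator (measurableSet_le measurable_fst measurable_snd.fst)
  have hcost : Measurable cost :=
    measurable_snd.fst.spendingCost measurable_snd.snd.fst measurable_snd.snd.snd measurable_fst
  calc μ {ω | Q ω ≤ a ω} = ∫⁻ ω, reject (Q ω, a ω, l ω, t ω) ∂μ :=
        (lintegral_indicator_one (measurableSet_le hQm ha)).symm
    _ = ∫⁻ ω', ∫⁻ ω, reject (Q ω, a ω', l ω', t ω') ∂μ ∂μ :=
        hind.lintegral_comp_eq_lintegral_lintegral hQm hV hreject
    _ ≤ ∫⁻ ω', ∫⁻ ω, cost (Q ω, a ω', l ω', t ω') ∂μ ∂μ := by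
        refine lintegral_mono_ae (hlevels.mono fun ω' ⟨ha0, hat, hl0, hlt, ht1⟩ => ?_)
        calc ∫⁻ ω, reject (Q ω, a ω', l ω', t ω') ∂μ = μ (Q ⁻¹' Iic (a ω')) :=
              lintegral_indicator_one (hQm measurableSet_Iic)
          _ ≤ _ := hQ.measure_Iic_le_mul_measure_Ioc ha0 hat hl0 hlt ht1
          _ = _ := (lintegral_spendingCost hQm _ _ _).symm
    _ = ∫⁻ ω, spendingCost (a ω) (l ω) (t ω) (Q ω) ∂μ :=
        (hind.lintegral_comp_eq_lintegral_lintegral hQm hV hcost).symm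

end UniformlyConservative

lemma tsum_measure_le_of_le_lintegral [IsProbabilityMeasure μ] {ι : Type*} [Countable ι]
    {E : ι → Set Ω} {c : ι → Ω → ℝ≥0∞} (hc : ∀ i, AEMeasurable (c i) μ)
    (hE : ∀ i, μ (E i) ≤ ∫⁻ ω, c i ω ∂μ) {B : ℝ≥0∞} (hB : ∀ᵐ ω ∂μ, ∑' i, c i ω ≤ B) :
    ∑' i, μ (E i) ≤ B :=
  calc ∑' i, μ (E i) ≤ ∑' i, ∫⁻ ω, c i ω ∂μ := ENNReal.tsum_le_tsum hE
    _ = ∫⁻ ω, ∑' i, c i ω ∂μ := (lintegral_tsum hc).symm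
    _ ≤ ∫⁻ _, B ∂μ := lintegral_mono_ae hB
    _ = B := by simp

lemma pastFiltration_le {P : ℕ → Ω → ℝ} (hP : ∀ i, Measurable (P i)) (n : ℕ) :
    pastFiltration P n ≤ mΩ :=
  iSup₂_le fun j _ => (hP j).comap_le

end

theorem addis_spending_local_dependence_pfer_control_general
    {Ω : Type*} [MeasurableSpace Ω] (μ : Measure Ω) [IsProbabilityMeasure μ]
    (P : ℕ → Ω → ℝ) (hPmeas : ∀ i, Measurable (P i))
    (H0 : Set ℕ)
    (L : ℕ → ℕ)
    (hconserv : ∀ i ∈ H0, ∀ x ∈ Set.Icc (0 : ℝ) 1, ∀ τ ∈ Set.Icc (0 : ℝ) 1,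
      μ {ω | P i ω ≤ x * τ} ≤ ENNReal.ofReal x * μ {ω | P i ω ≤ τ})
    (hindep : ∀ i ∈ H0,
      Indep (MeasurableSpace.comap (P i) inferInstance) (pastFiltration P (i - L i)) μ)
    (α : ℝ)
    (alev lamlev τlev : ℕ → Ω → ℝ)
    (halev_meas : ∀ i, Measurable[pastFiltration P (i - L i)] (alev i))
    (hlamlev_meas : ∀ i, Measurable[pastFiltration P (i - L i)] (lamlev i))
    (hτlev_meas : ∀ i, Measurable[pastFiltration P (i - L i)] (τlev i))
    (halev_range : ∀ i ω, alev i ω ∈ Set.Ioo (0 : ℝ) 1)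
    (hlamlev_range : ∀ i ω, lamlev i ω ∈ Set.Ioo (0 : ℝ) 1)
    (hτlev_range : ∀ i ω, τlev i ω ∈ Set.Ioo (0 : ℝ) 1)
    (h_lam_lt : ∀ i, ∀ᵐ ω ∂μ, lamlev i ω < τlev i ω)
    (h_alev_lt : ∀ i, ∀ᵐ ω ∂μ, alev i ω < τlev i ω)
    (hbudget : ∀ᵐ ω ∂μ,
      ∑' i, ENNReal.ofReal
          (if lamlev i ω < P i ω ∧ P i ω ≤ τlev i ω then
            alev i ω / (τlev i ω - lamlev i ω) else 0)
        ≤ ENNReal.ofReal α) :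
    (∫⁻ ω, ∑' i : H0, Set.indicator {ω' | P i ω' ≤ alev i ω'} (fun _ => (1 : ℝ≥0∞)) ω ∂μ)
        ≤ ENNReal.ofReal α ∧
      μ {ω | ∃ i ∈ H0, P i ω ≤ alev i ω} ≤ ENNReal.ofReal α := by
  have hlevel {f : Ω → ℝ} {i : ℕ} (hf : Measurable[pastFiltration P (i - L i)] f) :
      Measurable f := hf.mono (pastFiltration_le hPmeas _) le_rfl
  have hreject (i : ℕ) : MeasurableSet {ω | P i ω ≤ alev i ω} :=
    measurableSet_le (hPmeas i) (hlevel (halev_meas i))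
  have hcost (i : ℕ) (hi : i ∈ H0) : μ {ω | P i ω ≤ alev i ω} ≤
      ∫⁻ ω, spendingCost (alev i ω) (lamlev i ω) (τlev i ω) (P i ω) ∂μ := by
    refine UniformlyConservative.measure_le_lintegral_spendingCost (hconserv i hi) (hPmeas i)
      (hlevel (halev_meas i)) (hlevel (hlamlev_meas i)) (hlevel (hτlev_meas i))
      (indep_of_indep_of_le_right (hindep i hi)
        ((halev_meas i).prodMk ((hlamlev_meas i).prodMk (hτlev_meas i))).comap_le) ?_
    filter_upwards [h_lam_lt i, h_alev_lt i] with ω hlt hat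
    exact ⟨(halev_range i ω).1.le, hat.le, (hlamlev_range i ω).1.le, hlt, (hτlev_range i ω).2.le⟩
  have hsum : ∑' i : H0, μ {ω | P i ω ≤ alev i ω} ≤ ENNReal.ofReal α :=
    tsum_measure_le_of_le_lintegral
      (fun i : H0 => ((hlevel (halev_meas i)).spendingCost (hlevel (hlamlev_meas i))
        (hlevel (hτlev_meas i)) (hPmeas i)).aemeasurable)
      (fun i : H0 => hcost i i.2)
      (hbudget.mono fun _ h =>
        (ENNReal.tsum_comp_le_tsum_of_injective Subtype.val_injective _).trans h)
  refine ⟨?_, ?_⟩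
  · rw [lintegral_tsum fun i : H0 => (measurable_const.indicator (hreject i)).aemeasurable]
    simpa only [lintegral_indicator_const (hreject _), one_mul] using hsum
  · rw [show {ω | ∃ i ∈ H0, P i ω ≤ alev i ω} = ⋃ i ∈ H0, {ω | P i ω ≤ alev i ω} by ext; simp]
    exact (measure_biUnion_le μ H0.to_countable _).trans hsum

/-- **Altered ADDIS-Spending under local dependence controls PFER (hence FWER).**
Given lags `L i` with `L (i+1) ≤ L i + 1`, suppose each null p-value `P i` is uniformly
conservative and independent of the σ-algebra generated by the p-values more than `L i`
steps in the past; the levels `α_i, λ_i, τ_i` are measurable with respect to that lagged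
σ-algebra and `(0,1)`-valued with `λ_i < τ_i` and `α_i < τ_i` a.s.; and a.s.
`∑_{i : λ_i < P_i ≤ τ_i} α_i/(τ_i - λ_i) ≤ α`. Then the expected number of false
discoveries is at most `α`; in particular the FWER is at most `α`. -/
theorem addis_spending_local_dependence_pfer_control
    {Ω : Type*} [MeasurableSpace Ω] (μ : Measure Ω) [IsProbabilityMeasure μ]
    (P : ℕ → Ω → ℝ) (hPmeas : ∀ i, Measurable (P i))
    (hPrange : ∀ i ω, P i ω ∈ Set.Icc (0 : ℝ) 1)
    (H0 : Set ℕ)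
    (L : ℕ → ℕ) (hL : ∀ i, L (i + 1) ≤ L i + 1)
    (hconserv : ∀ i ∈ H0, ∀ x ∈ Set.Icc (0 : ℝ) 1, ∀ τ ∈ Set.Icc (0 : ℝ) 1,
      μ {ω | P i ω ≤ x * τ} ≤ ENNReal.ofReal x * μ {ω | P i ω ≤ τ})
    (hindep : ∀ i ∈ H0,
      Indep (MeasurableSpace.comap (P i) inferInstance) (pastFiltration P (i - L i)) μ)
    (α : ℝ) (hα : α ∈ Set.Ioo (0 : ℝ) 1)
    (alev lamlev τlev : ℕ → Ω → ℝ)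
    (halev_meas : ∀ i, Measurable[pastFiltration P (i - L i)] (alev i))
    (hlamlev_meas : ∀ i, Measurable[pastFiltration P (i - L i)] (lamlev i))
    (hτlev_meas : ∀ i, Measurable[pastFiltration P (i - L i)] (τlev i))
    (halev_range : ∀ i ω, alev i ω ∈ Set.Ioo (0 : ℝ) 1)
    (hlamlev_range : ∀ i ω, lamlev i ω ∈ Set.Ioo (0 : ℝ) 1)
    (hτlev_range : ∀ i ω, τlev i ω ∈ Set.Ioo (0 : ℝ) 1)
    (h_lam_lt : ∀ i, ∀ᵐ ω ∂μ, lamlev i ω < τlev i ω)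
    (h_alev_lt : ∀ i, ∀ᵐ ω ∂μ, alev i ω < τlev i ω)
    (hbudget : ∀ᵐ ω ∂μ,
      ∑' i, ENNReal.ofReal
          (if lamlev i ω < P i ω ∧ P i ω ≤ τlev i ω then
            alev i ω / (τlev i ω - lamlev i ω) else 0)
        ≤ ENNReal.ofReal α) :
    (∫⁻ ω, ∑' i : H0, Set.indicator {ω' | P i ω' ≤ alev i ω'} (fun _ => (1 : ℝ≥0∞)) ω ∂μ)
        ≤ ENNReal.ofReal α ∧
      μ {ω | ∃ i ∈ H0, P i ω ≤ alev i ω} ≤ ENNReal.ofReal α :=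
  addis_spending_local_dependence_pfer_control_general μ P hPmeas H0 L hconserv hindep α alev lamlev
    τlev halev_meas hlamlev_meas hτlev_meas halev_range hlamlev_range hτlev_range h_lam_lt h_alev_lt
    hbudget
end

section
/- For every q > 1, every constant C > 0 and every α ∈ (0,1), the series Σ_{i=2}^∞ (1/(i·(log i)^q)) · exp( −C · Φ⁻¹( α/(ζ_l(q)·i·(log i)^q) ) ) · log(log i) diverges to +∞, where ζ_l(q) = Σ_{i=2}^∞ 1/(i·(log i)^q). -/
open MeasureTheory ProbabilityTheory Filter

/-- The standard normal CDF `Φ`. -/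
noncomputable def stdNormalCDF (x : ℝ) : ℝ :=
  (ProbabilityTheory.gaussianReal 0 1 (Set.Iic x)).toReal

/-- The inverse `Φ⁻¹` of the standard normal CDF (on `(0,1)`). -/
noncomputable def stdNormalQuantile : ℝ → ℝ :=
  Function.invFun stdNormalCDF

/-- `ζ_l(q) = ∑_{i=2}^∞ 1/(i (log i)^q)`. -/
noncomputable def zetaLog (q : ℝ) : ℝ :=
  ∑' i : ℕ, 1 / (((i : ℝ) + 2) * Real.log ((i : ℝ) + 2) ^ q)

/-!
Since `Φ(-t) ≥ φ(t + 1)` for the Gaussian density `φ`, the level `a = α / (ζ x (log x)^q)` lies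
below `Φ(-(q/C) log log x)` as soon as `(log log x)²` is small against `log x`, i.e. for all large
`x`. Hence `Φ⁻¹(a) ≤ -(q/C) log log x`, so `exp(-C Φ⁻¹(a)) ≥ (log x)^q` and the term at `x` is at
least `log log x / x ≥ 1 / x`: the series dominates the harmonic series.
-/

open Real

lemma continuous_cdf (μ : Measure ℝ) [IsProbabilityMeasure μ] [NullSingletonClass μ] :
    Continuous (cdf μ) := by
  refine continuous_iff_continuousAt.2 fun x => ?_
  rw [(monotone_cdf μ).continuousAt_iff_leftLim_eq_rightLim, (cdf μ).rightLim_eq]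
  have hatom : ENNReal.ofReal (cdf μ x - Function.leftLim (cdf μ) x) = 0 := by
    rw [← StieltjesFunction.measure_singleton, measure_cdf, measure_singleton]
  have hle := (monotone_cdf μ).leftLim_le (le_refl x)
  rw [ENNReal.ofReal_eq_zero] at hatom
  linarith

lemma strictMono_cdf (μ : Measure ℝ) [IsProbabilityMeasure μ] (h : volume ≪ μ) :
    StrictMono (cdf μ) := by
  intro x y hxy
  have hpos : 0 < μ (Set.Ioc x y) := by
    refine pos_iff_ne_zero.2 fun h0 => ?_
    have hvol := h h0
    simp only [Real.volume_Ioc, ENNReal.ofReal_eq_zero, tsub_le_iff_right, zero_add] at hvol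
    exact hvol.not_gt hxy
  rw [← measure_cdf μ, StieltjesFunction.measure_Ioc, ENNReal.ofReal_pos] at hpos
  linarith

lemma StrictMono.invFun_le {α β : Type*} [LinearOrder α] [TopologicalSpace α] [OrderTopology α]
    [PreconnectedSpace α] [Nonempty α] [LinearOrder β] [TopologicalSpace β] [OrderClosedTopology β]
    {f : α → β} (hmono : StrictMono f) (hcont : Continuous f) {y : β} {t : α}
    (hlow : ∃ a, f a ≤ y) (h : y ≤ f t) : Function.invFun f y ≤ t := by
  have hy : y ∈ Set.range f := mem_range_of_exists_le_of_exists_ge hcont hlow ⟨t, h⟩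
  rw [← hmono.le_iff_le, Function.invFun_eq hy]
  exact h

lemma stdNormalCDF_eq_cdf : stdNormalCDF = cdf (gaussianReal 0 1) :=
  funext fun x => (cdf_eq_real _ x).symm

lemma stdNormalQuantile_le {y t : ℝ} (hy : 0 < y) (h : y ≤ stdNormalCDF t) :
    stdNormalQuantile y ≤ t := by
  have : NullSingletonClass (gaussianReal 0 1) := nullSingletonClass_gaussianReal one_ne_zero
  rw [stdNormalCDF_eq_cdf] at h
  rw [stdNormalQuantile, stdNormalCDF_eq_cdf]
  refine StrictMono.invFun_le ?_ (continuous_cdf _) ?_ h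
  · exact strictMono_cdf _ (gaussianReal_absolutelyContinuous' 0 one_ne_zero)
  · exact ((tendsto_cdf_atBot _).eventually (gt_mem_nhds hy)).exists.imp fun _ => le_of_lt

lemma gaussianPDFReal_zero_one (x : ℝ) :
    gaussianPDFReal 0 1 x = (√(2 * π))⁻¹ * exp (-x ^ 2 / 2) := by
  simp [gaussianPDFReal]

lemma gaussianPDFReal_sub_one_le_stdNormalCDF {x : ℝ} (hx : x ≤ 0) :
    gaussianPDFReal 0 1 (x - 1) ≤ stdNormalCDF x := by
  have hpdf : ∀ y ∈ Set.Ioc (x - 1) x, gaussianPDFReal 0 1 (x - 1) ≤ gaussianPDFReal 0 1 y := by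
    rintro y ⟨hy₁, hy₂⟩
    rw [gaussianPDFReal_zero_one, gaussianPDFReal_zero_one]
    exact mul_le_mul_of_nonneg_left (exp_le_exp.2 (by nlinarith)) (by positivity)
  calc gaussianPDFReal 0 1 (x - 1)
      = gaussianPDFReal 0 1 (x - 1) * volume.real (Set.Ioc (x - 1) x) := by simp
    _ ≤ ∫ y in Set.Ioc (x - 1) x, gaussianPDFReal 0 1 y :=
        setIntegral_ge_of_const_le_real measurableSet_Ioc measure_Ioc_lt_top.ne hpdf
          (integrable_gaussianPDFReal 0 1).integrableOn
    _ = (gaussianReal 0 1 (Set.Ioc (x - 1) x)).toReal := by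
        rw [gaussianReal_apply_eq_integral _ one_ne_zero, ENNReal.toReal_ofReal
          (setIntegral_nonneg measurableSet_Ioc fun y _ => gaussianPDFReal_nonneg 0 1 y)]
    _ ≤ stdNormalCDF x :=
        ENNReal.toReal_mono (measure_ne_top _ _) (measure_mono Set.Ioc_subset_Iic_self)

lemma stdNormalQuantile_le_neg {y t : ℝ} (ht : 0 ≤ t) (hy : 0 < y)
    (h : y ≤ (√(2 * π))⁻¹ * exp (-(t + 1) ^ 2 / 2)) : stdNormalQuantile y ≤ -t := by
  have hcdf := gaussianPDFReal_sub_one_le_stdNormalCDF (neg_nonpos.2 ht)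
  rw [gaussianPDFReal_zero_one, show (-t - 1) ^ 2 = (t + 1) ^ 2 by ring] at hcdf
  exact stdNormalQuantile_le hy (h.trans hcdf)

lemma eventually_quadratic_le_exp (a b c : ℝ) :
    ∀ᶠ u in atTop, a * u ^ 2 + b * u + c ≤ exp u := by
  filter_upwards [eventually_ge_atTop 1,
    (tendsto_exp_div_pow_atTop 2).eventually_ge_atTop (|a| + |b| + |c|)] with u hu hexp
  rw [le_div_iff₀ (by positivity)] at hexp
  have hu2 : u ≤ u ^ 2 := by nlinarith
  nlinarith [le_abs_self a, le_abs_self b, le_abs_self c, abs_nonneg b, abs_nonneg c]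

lemma eventually_rpow_log_le_exp_neg_mul_stdNormalQuantile {q C c : ℝ} (hq : 0 ≤ q) (hC : 0 < C)
    (hc : 0 < c) :
    ∀ᶠ x in atTop, log x ^ q ≤ exp (-C * stdNormalQuantile (c / (x * log x ^ q))) := by
  set s := q / C
  have hK : 0 < (√(2 * π))⁻¹ := by positivity
  have hloglog : Tendsto (fun x => log (log x)) atTop atTop :=
    tendsto_log_atTop.comp tendsto_log_atTop
  -- With `u = log log x`, `hpoly` is the condition `c / (x (log x)^q) ≤ φ(s u + 1)`.
  filter_upwards [eventually_ge_atTop (exp 1), hloglog.eventually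
    (eventually_quadratic_le_exp (s ^ 2 / 2) (s - q) (1 / 2 + log c - log (√(2 * π))⁻¹))]
    with x hx hpoly
  have hx₀ : 0 < x := (exp_pos 1).trans_le hx
  have hL : 1 ≤ log x := (le_log_iff_exp_le hx₀).2 hx
  set u := log (log x)
  have hu : 0 ≤ u := log_nonneg hL
  have hxL : 0 < x * log x ^ q := by positivity
  have hy : 0 < c / (x * log x ^ q) := by positivity
  have hlog : log (c / (x * log x ^ q)) = log c - exp u - q * u := by
    rw [log_div hc.ne' hxL.ne', log_mul hx₀.ne' (rpow_pos_of_pos (by linarith) q).ne',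
      log_rpow (by positivity), exp_log (by positivity)]
    ring
  have hquant : stdNormalQuantile (c / (x * log x ^ q)) ≤ -(s * u) := by
    refine stdNormalQuantile_le_neg (by positivity) hy ?_
    rw [← exp_log hy, ← exp_log hK, ← exp_add, exp_le_exp, hlog]
    linarith
  have hCs : C * s = q := mul_div_cancel₀ q hC.ne'
  calc log x ^ q = exp (q * u) := by rw [rpow_def_of_pos (by positivity), mul_comm]
    _ ≤ exp (-C * stdNormalQuantile (c / (x * log x ^ q))) := exp_le_exp.2 (by nlinarith)

lemma summable_one_div_nat_mul_log_rpow {q : ℝ} (hq : 1 < q) :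
    Summable fun n : ℕ => 1 / ((n : ℝ) * log n ^ q) := by
  have hpos : ∀ n : ℕ, 2 ≤ n → 0 < (n : ℝ) * log n ^ q := fun n hn => by
    have : 0 < log n := log_pos (by exact_mod_cast hn)
    positivity
  rw [← summable_condensed_iff_of_eventually_nonneg]
  · refine ((summable_nat_rpow_inv.2 hq).mul_left (log 2 ^ q)⁻¹).congr fun k => ?_
    push_cast
    rw [log_pow, mul_rpow (Nat.cast_nonneg k) (log_nonneg one_le_two), one_div, mul_inv,
      ← mul_assoc, mul_inv_cancel₀ (by positivity), one_mul, mul_inv, mul_comm]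
  · filter_upwards [eventually_ge_atTop 2] with n hn using (one_div_pos.2 (hpos n hn)).le
  · filter_upwards [eventually_ge_atTop 2] with n hn
    refine one_div_le_one_div_of_le (hpos n hn) ?_
    have : 0 < log n := log_pos (by exact_mod_cast hn)
    push_cast
    gcongr <;> linarith

lemma zetaLog_pos {q : ℝ} (hq : 1 < q) : 0 < zetaLog q := by
  have hterm : ∀ i : ℕ, 0 < 1 / (((i : ℝ) + 2) * log ((i : ℝ) + 2) ^ q) := fun i => by
    have : 0 < log ((i : ℝ) + 2) := log_pos (by linarith [(Nat.cast_nonneg i : (0 : ℝ) ≤ i)])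
    positivity
  have hsum : Summable fun i : ℕ => 1 / (((i : ℝ) + 2) * log ((i : ℝ) + 2) ^ q) := by
    exact_mod_cast (summable_nat_add_iff 2).2 (summable_one_div_nat_mul_log_rpow hq)
  exact hsum.tsum_pos (fun i => (hterm i).le) 0 (hterm 0)

lemma tendsto_sum_range_atTop_of_eventually_le {f g : ℕ → ℝ} (hfg : ∀ᶠ i in atTop, f i ≤ g i)
    (hf : Tendsto (fun n => ∑ i ∈ Finset.range n, f i) atTop atTop) :
    Tendsto (fun n => ∑ i ∈ Finset.range n, g i) atTop atTop := by
  obtain ⟨N, hN⟩ := eventually_atTop.1 hfg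
  refine tendsto_atTop_mono' atTop ?_
    (tendsto_atTop_add_const_right atTop (∑ i ∈ Finset.range N, (g i - f i)) hf)
  filter_upwards [eventually_ge_atTop N] with n hn
  have hIco : ∑ i ∈ Finset.Ico N n, f i ≤ ∑ i ∈ Finset.Ico N n, g i :=
    Finset.sum_le_sum fun i hi => hN i (Finset.mem_Ico.1 hi).1
  rw [Finset.sum_Ico_eq_sub _ hn, Finset.sum_Ico_eq_sub _ hn] at hIco
  rw [Finset.sum_sub_distrib]
  linarith

lemma tendsto_sum_range_one_div_nat_add_two :
    Tendsto (fun n => ∑ i ∈ Finset.range n, 1 / ((i : ℝ) + 2)) atTop atTop := by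
  rw [← not_summable_iff_tendsto_nat_atTop_of_nonneg fun i => by positivity]
  exact_mod_cast mt (summable_nat_add_iff 2).1 not_summable_one_div_natCast

/-- For every `q > 1`, `C > 0` and `α ∈ (0,1)`, the series
`∑_{i=2}^∞ (1/(i (log i)^q)) · exp(−C·Φ⁻¹(α/(ζ_l(q) i (log i)^q))) · log(log i)`
diverges to `+∞`. -/
theorem log_q_series_exp_quantile_diverges
    (q C α : ℝ) (hq : 1 < q) (hC : 0 < C) (hα : α ∈ Set.Ioo (0 : ℝ) 1) :
    Tendsto (fun n : ℕ => ∑ i ∈ Finset.range n,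
        1 / (((i : ℝ) + 2) * Real.log ((i : ℝ) + 2) ^ q) *
          Real.exp (-C * stdNormalQuantile
            (α / (zetaLog q * (((i : ℝ) + 2) * Real.log ((i : ℝ) + 2) ^ q)))) *
          Real.log (Real.log ((i : ℝ) + 2)))
      atTop atTop := by
  have hterm : ∀ᶠ x in atTop, 1 / x ≤ 1 / (x * log x ^ q) *
      exp (-C * stdNormalQuantile (α / (zetaLog q * (x * log x ^ q)))) * log (log x) := by
    filter_upwards [eventually_ge_atTop (exp (exp 1)),
      eventually_rpow_log_le_exp_neg_mul_stdNormalQuantile (by linarith : 0 ≤ q) hC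
        (div_pos hα.1 (zetaLog_pos hq))] with x hx hexp
    rw [div_div] at hexp
    have hx₀ : 0 < x := (exp_pos _).trans_le hx
    have hlog : exp 1 ≤ log x := (le_log_iff_exp_le hx₀).2 hx
    have hlog₀ : 0 < log x := (exp_pos 1).trans_le hlog
    have hloglog : 1 ≤ log (log x) := (le_log_iff_exp_le hlog₀).2 hlog
    calc 1 / x = 1 / (x * log x ^ q) * log x ^ q * 1 := by field_simp
      _ ≤ _ := by gcongr
  have hshift : Tendsto (fun i : ℕ => (i : ℝ) + 2) atTop atTop :=
    tendsto_atTop_add_const_right _ 2 tendsto_natCast_atTop_atTop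
  exact tendsto_sum_range_atTop_of_eventually_le (hshift.eventually hterm)
    tendsto_sum_range_one_div_nat_add_two
end
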